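/- Let X ≥ 0 be a random variable and suppose P(X > μ + u) ≤ k e^{−u²/(2σ²)} for all u > 0, where μ, σ, k > 0. Then for every p ≥ 1, E[X^p] ≤ μ^p + p k √(2π) σ E[|Z|^{p−1}], where Z is Gaussian with mean μ and variance σ². -/

import Mathlib

/-! By the layer-cake formula, `E[X^p] = p ∫_0^∞ t^(p-1) P(X > t) dt`. On `(0, μ]` bound the
probability by `1`, which contributes `μ^p`. On `(μ, ∞)` use the tail bound and enlarge the
domain to all of `ℝ`, replacing `t^(p-1)` by `|t|^(p-1)`: what remains is `√(2πσ²)` times the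
`(p-1)`-th absolute moment of the Gaussian with mean `μ` and variance `σ²`. -/

open MeasureTheory ProbabilityTheory Real Set ENNReal
open scoped NNReal

lemma setLIntegral_Ioc_zero_rpow_sub_one {a p : ℝ} (ha : 0 ≤ a) (hp : 0 < p) :
    ∫⁻ t in Ioc 0 a, ENNReal.ofReal (t ^ (p - 1)) = ENNReal.ofReal (a ^ p / p) := by
  have hp' : -1 < p - 1 := by linarith
  rw [← ofReal_integral_eq_lintegral_ofReal (intervalIntegral.intervalIntegrable_rpow' hp').1
    ((ae_restrict_iff' measurableSet_Ioc).2 (.of_forall fun t ht => rpow_nonneg ht.1.le _)),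
    ← intervalIntegral.integral_of_le ha, integral_rpow (.inl hp'), sub_add_cancel,
    Real.zero_rpow hp.ne', sub_zero]

lemma lintegral_rpow_le_of_meas_lt_le {Ω : Type*} [MeasurableSpace Ω] {P : Measure Ω}
    [IsProbabilityMeasure P] {X : Ω → ℝ} (hX : AEMeasurable X P) (hX0 : 0 ≤ᵐ[P] X)
    {a p : ℝ} (ha : 0 ≤ a) (hp : 0 < p) {f : ℝ → ℝ≥0∞}
    (hf : ∀ t, a < t → P {ω | t < X ω} ≤ f t) :
    ∫⁻ ω, ENNReal.ofReal (X ω ^ p) ∂P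
      ≤ ENNReal.ofReal (a ^ p)
        + ENNReal.ofReal p * ∫⁻ t in Ioi a, f t * ENNReal.ofReal (t ^ (p - 1)) := by
  rw [lintegral_rpow_eq_lintegral_meas_lt_mul P hX0 hX hp, ← Ioc_union_Ioi_eq_Ioi ha,
    lintegral_union measurableSet_Ioi Ioc_disjoint_Ioi_same, mul_add]
  gcongr ?_ + ENNReal.ofReal p * ?_
  · calc ENNReal.ofReal p * ∫⁻ t in Ioc 0 a, P {ω | t < X ω} * ENNReal.ofReal (t ^ (p - 1))
        ≤ ENNReal.ofReal p * ∫⁻ t in Ioc 0 a, ENNReal.ofReal (t ^ (p - 1)) := by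
          gcongr with t
          exact mul_le_of_le_one_left' prob_le_one
      _ = ENNReal.ofReal (a ^ p) := by
          rw [setLIntegral_Ioc_zero_rpow_sub_one ha hp, ← ofReal_mul hp.le,
            mul_div_cancel₀ _ hp.ne']
  · exact setLIntegral_mono' measurableSet_Ioi fun t ht => by gcongr; exact hf t ht

lemma lintegral_exp_neg_sq_mul_eq_lintegral_gaussianReal (m : ℝ) {v : ℝ≥0} (hv : v ≠ 0)
    {g : ℝ → ℝ≥0∞} (hg : Measurable g) :
    ∫⁻ t, ENNReal.ofReal (exp (-(t - m) ^ 2 / (2 * v))) * g t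
      = ENNReal.ofReal √(2 * π * v) * ∫⁻ t, g t ∂gaussianReal m v := by
  have hc : 0 < √(2 * π * v) := by positivity
  rw [gaussianReal_of_var_ne_zero m hv, lintegral_withDensity_eq_lintegral_mul _
    (measurable_gaussianPDF m v) hg, ← lintegral_const_mul _ (by fun_prop)]
  congr 1 with t
  rw [Pi.mul_apply, ← mul_assoc, gaussianPDF, gaussianPDFReal, ← ofReal_mul hc.le,
    mul_inv_cancel_left₀ hc.ne']

lemma integrable_abs_rpow_gaussianReal (m : ℝ) (v : ℝ≥0) {s : ℝ} (hs : 0 ≤ s) :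
    Integrable (fun z => |z| ^ s) (gaussianReal m v) := by
  simpa [ENNReal.toReal_ofReal hs] using
    (memLp_id_gaussianReal' (μ := m) (v := v) (.ofReal s) ofReal_ne_top).integrable_norm_rpow'

lemma setLIntegral_exp_neg_sq_mul_rpow_le (m : ℝ) {v : ℝ≥0} (hv : v ≠ 0) {s : ℝ}
    (hs : 0 ≤ s) :
    ∫⁻ t in Ioi m, ENNReal.ofReal (exp (-(t - m) ^ 2 / (2 * v))) * ENNReal.ofReal (t ^ s)
      ≤ ENNReal.ofReal (√(2 * π * v) * ∫ z, |z| ^ s ∂gaussianReal m v) := by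
  calc _ ≤ ∫⁻ t, ENNReal.ofReal (exp (-(t - m) ^ 2 / (2 * v)))
          * ENNReal.ofReal (|t| ^ s) := by
        refine (setLIntegral_le_lintegral _ _).trans (lintegral_mono fun t => ?_)
        gcongr _ * ENNReal.ofReal ?_
        exact (le_abs_self _).trans (abs_rpow_le_abs_rpow t s)
    _ = _ := by
        rw [lintegral_exp_neg_sq_mul_eq_lintegral_gaussianReal m hv (by fun_prop),
          ← ofReal_integral_eq_lintegral_ofReal (integrable_abs_rpow_gaussianReal m v hs)
            (.of_forall fun z => by positivity),
          ofReal_mul (by positivity)]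

theorem moment_bound_of_gaussian_tail
    {Ω : Type*} [MeasurableSpace Ω] (P : Measure Ω) [IsProbabilityMeasure P]
    (X : Ω → ℝ) (hX : Measurable X) (hXpos : ∀ ω, 0 ≤ X ω)
    (μ σ k : ℝ) (hμ : 0 < μ) (hσ : 0 < σ) (hk : 0 < k)
    (htail : ∀ u : ℝ, 0 < u →
      P {ω | μ + u < X ω} ≤ ENNReal.ofReal (k * Real.exp (-u ^ 2 / (2 * σ ^ 2))))
    (v : NNReal) (hv : (v : ℝ) = σ ^ 2) (p : ℝ) (hp : 1 ≤ p) :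
    (∫ ω, X ω ^ p ∂P)
      ≤ μ ^ p + p * k * Real.sqrt (2 * Real.pi) * σ *
          ∫ z, |z| ^ (p - 1) ∂(gaussianReal μ v) := by
  have hp0 : 0 < p := by linarith
  have hv0 : v ≠ 0 := by rintro rfl; simp at hv; exact (pow_pos hσ 2).ne' hv.symm
  have hsqrt : √(2 * π * v) = √(2 * π) * σ := by
    rw [hv, sqrt_mul (by positivity), sqrt_sq hσ.le]
  set G := ∫ z, |z| ^ (p - 1) ∂gaussianReal μ v
  have hG : 0 ≤ G := integral_nonneg fun z => by positivity
  have hf : ∀ t, μ < t → P {ω | t < X ω}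
      ≤ ENNReal.ofReal k * ENNReal.ofReal (exp (-(t - μ) ^ 2 / (2 * v))) := fun t ht => by
    simpa [hv, ← ofReal_mul hk.le] using htail (t - μ) (sub_pos.2 ht)
  rw [integral_eq_lintegral_of_nonneg_ae (.of_forall fun ω => by have := hXpos ω; positivity)
    (hX.pow_const p).aestronglyMeasurable]
  refine toReal_le_of_le_ofReal (by positivity) ?_
  calc ∫⁻ ω, ENNReal.ofReal (X ω ^ p) ∂P
      ≤ ENNReal.ofReal (μ ^ p) + ENNReal.ofReal p * (ENNReal.ofReal k * ∫⁻ t in Ioi μ,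
          ENNReal.ofReal (exp (-(t - μ) ^ 2 / (2 * v))) * ENNReal.ofReal (t ^ (p - 1))) := by
        rw [← lintegral_const_mul' _ _ ofReal_ne_top]
        simp_rw [← mul_assoc]
        exact lintegral_rpow_le_of_meas_lt_le hX.aemeasurable (.of_forall hXpos) hμ.le hp0 hf
    _ ≤ ENNReal.ofReal (μ ^ p) + ENNReal.ofReal p * (ENNReal.ofReal k *
          ENNReal.ofReal (√(2 * π * v) * G)) := by
        gcongr
        exact setLIntegral_exp_neg_sq_mul_rpow_le μ hv0 (by linarith)
    _ = ENNReal.ofReal (μ ^ p + p * k * √(2 * π) * σ * G) := by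
        rw [← ofReal_mul hk.le, ← ofReal_mul hp0.le,
          ← ofReal_add (by positivity) (by positivity), hsqrt]
        ring_nf
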